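/- arXiv:1911.08467 — 8 statements merged into one kernel-verified Lean document; each statement's English description precedes it below -/
import Mathlib

section
/- Let r_s > 0 and let Ω be an open subset of EuclideanSpace ℝ (Fin 3) such that ‖x‖ > r_s/4 for every x ∈ Ω. Let φ, ψ : EuclideanSpace ℝ (Fin 3) → ℝ be twice continuously differentiable on Ω, let ℓ : ℝ → ℝ be continuously differentiable, define G : EuclideanSpace ℝ (Fin 3) → ℝ by G(x) := −2·ℓ(‖∇φ(x)‖²), and assume G(x) ≠ 0 and ∇ψ(x) = G(x)·∇φ(x) for all x ∈ Ω. Define the radial coefficient c(r) := −(r_s/(4r²))·(3/(1 + r_s/(4r)) + 1/(1 − r_s/(4r))). Then for every x ∈ Ω the following are equivalent: (i) Δψ(x) + c(‖x‖)·⟨x/‖x‖, ∇ψ(x)⟩ = 0 (the source-free Maxwell electrostatic equation in the isotropic Schwarzschild background); (ii) Δφ(x) + c(‖x‖)·⟨x/‖x‖, ∇φ(x)⟩ + ⟨∇G(x), ∇φ(x)⟩/G(x) = 0 (the source-free electrostatic equation of the nonlinear electrodynamics with L_F = ℓ). -/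
open RealInnerProductSpace

/-- The Laplacian of a real-valued function on `EuclideanSpace ℝ (Fin 3)`, as the trace
of its second derivative. -/
noncomputable def laplacian3 (f : EuclideanSpace ℝ (Fin 3) → ℝ)
    (x : EuclideanSpace ℝ (Fin 3)) : ℝ :=
  ∑ i : Fin 3,
    iteratedFDeriv ℝ 2 f x ![EuclideanSpace.single i 1, EuclideanSpace.single i 1]

/-!
Since `∇ψ = G ∇φ`, the product rule gives `Δψ = G Δφ + ⟨∇G, ∇φ⟩`, while the radial terms
satisfy `⟨x/‖x‖, ∇ψ⟩ = G ⟨x/‖x‖, ∇φ⟩`. Hence the left-hand side of the Maxwell equation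
for `ψ` is `G` times the left-hand side of the nonlinear equation for `φ`, and `G ≠ 0`.
-/

open InnerProductSpace Laplacian Filter Topology

section SecondDerivative

variable {E : Type*} [NormedAddCommGroup E] [NormedSpace ℝ E]

theorem iteratedFDeriv_two_apply_of_fderiv_eventuallyEq_smul {φ ψ G : E → ℝ} {x : E}
    (hψ : fderiv ℝ ψ =ᶠ[𝓝 x] fun y => G y • fderiv ℝ φ y)
    (hG : DifferentiableAt ℝ G x) (hφ : DifferentiableAt ℝ (fderiv ℝ φ) x) (u v : E) :
    iteratedFDeriv ℝ 2 ψ x ![u, v] =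
      G x * iteratedFDeriv ℝ 2 φ x ![u, v] + fderiv ℝ G x u * fderiv ℝ φ x v := by
  rw [iteratedFDeriv_two_apply, iteratedFDeriv_two_apply, hψ.fderiv_eq,
    fderiv_fun_smul hG hφ]
  simp

end SecondDerivative

section Gradient

variable {F : Type*} [NormedAddCommGroup F] [InnerProductSpace ℝ F] [CompleteSpace F]

theorem fderiv_eq_smul_of_gradient_eq_smul {φ ψ : F → ℝ} {x : F} {a : ℝ}
    (h : gradient ψ x = a • gradient φ x) : fderiv ℝ ψ x = a • fderiv ℝ φ x := by
  simpa [gradient, map_smul] using congrArg (toDual ℝ F) h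

theorem ContDiffOn.gradient_of_isOpen {f : F → ℝ} {s : Set F} {m n : WithTop ℕ∞}
    (hf : ContDiffOn ℝ n f s) (hs : IsOpen s) (hmn : m + 1 ≤ n) :
    ContDiffOn ℝ m (gradient f) s :=
  (toDual ℝ F).symm.contDiff.comp_contDiffOn (hf.fderiv_of_isOpen hs hmn)

end Gradient

section Laplacian

variable {E : Type*} [NormedAddCommGroup E] [InnerProductSpace ℝ E] [FiniteDimensional ℝ E]

theorem laplacian_eq_mul_laplacian_add_inner_gradient {φ ψ G : E → ℝ} {x : E}
    (hψ : fderiv ℝ ψ =ᶠ[𝓝 x] fun y => G y • fderiv ℝ φ y)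
    (hG : DifferentiableAt ℝ G x) (hφ : DifferentiableAt ℝ (fderiv ℝ φ) x) :
    Δ ψ x = G x * Δ φ x + ⟪gradient G x, gradient φ x⟫ := by
  let b := stdOrthonormalBasis ℝ E
  simp only [laplacian_eq_iteratedFDeriv_orthonormalBasis _ b,
    iteratedFDeriv_two_apply_of_fderiv_eventuallyEq_smul hψ hG hφ, Finset.sum_add_distrib,
    ← Finset.mul_sum, ← inner_gradient_left, ← real_inner_comm (gradient φ x),
    b.sum_inner_mul_inner]

end Laplacian

theorem laplacian3_eq_laplacian (f : EuclideanSpace ℝ (Fin 3) → ℝ)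
    (x : EuclideanSpace ℝ (Fin 3)) : laplacian3 f x = Δ f x := by
  simp [laplacian3, laplacian_eq_iteratedFDeriv_orthonormalBasis f (EuclideanSpace.basisFun _ ℝ)]

theorem nled_schwarzschild_electrostatics_general
    (Ω : Set (EuclideanSpace ℝ (Fin 3))) (hΩ : IsOpen Ω)
    (φ ψ : EuclideanSpace ℝ (Fin 3) → ℝ)
    (hφ : ContDiffOn ℝ 2 φ Ω)
    (ℓ : ℝ → ℝ) (hℓ : ContDiff ℝ 1 ℓ)
    (G : EuclideanSpace ℝ (Fin 3) → ℝ)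
    (hG : ∀ x, G x = -2 * ℓ (‖gradient φ x‖ ^ 2))
    (hGne : ∀ x ∈ Ω, G x ≠ 0)
    (hDψ : ∀ x ∈ Ω, gradient ψ x = G x • gradient φ x)
    (c : ℝ → ℝ) :
    ∀ x ∈ Ω,
      (laplacian3 ψ x + c ‖x‖ * ⟪‖x‖⁻¹ • x, gradient ψ x⟫ = 0 ↔
        laplacian3 φ x + c ‖x‖ * ⟪‖x‖⁻¹ • x, gradient φ x⟫ +
          ⟪gradient G x, gradient φ x⟫ / G x = 0) := by
  intro x hx
  have hΩx : Ω ∈ 𝓝 x := hΩ.mem_nhds hx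
  have hG_contDiff : ContDiffOn ℝ 1 G Ω :=
    (contDiffOn_const.mul ((hℓ.comp (contDiff_norm_sq ℝ)).comp_contDiffOn
      (hφ.gradient_of_isOpen hΩ (by norm_num)))).congr fun y _ => hG y
  have hDφ_contDiff : ContDiffOn ℝ 1 (fderiv ℝ φ) Ω := hφ.fderiv_of_isOpen hΩ (by norm_num)
  have hlap : laplacian3 ψ x = G x * laplacian3 φ x + ⟪gradient G x, gradient φ x⟫ := by
    simp only [laplacian3_eq_laplacian]
    exact laplacian_eq_mul_laplacian_add_inner_gradient
      (eventually_of_mem hΩx fun y hy => fderiv_eq_smul_of_gradient_eq_smul (hDψ y hy))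
      ((hG_contDiff.differentiableOn one_ne_zero).differentiableAt hΩx)
      ((hDφ_contDiff.differentiableOn one_ne_zero).differentiableAt hΩx)
  have hfactor : laplacian3 ψ x + c ‖x‖ * ⟪‖x‖⁻¹ • x, gradient ψ x⟫ =
      G x * (laplacian3 φ x + c ‖x‖ * ⟪‖x‖⁻¹ • x, gradient φ x⟫ +
        ⟪gradient G x, gradient φ x⟫ / G x) := by
    rw [hlap, hDψ x hx, real_inner_smul_right]
    field_simp [hGne x hx]
    ring
  rw [hfactor, mul_eq_zero, or_iff_right (hGne x hx)]

/-- Theorem 1 of the paper (source-free form): in the Schwarzschild background written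
in isotropic coordinates (radial coefficient
c(r) = −(r_s/(4r²))·(3/(1 + r_s/(4r)) + 1/(1 − r_s/(4r))), horizon at r = r_s/4), if
φ is the electrostatic potential of a nonlinear electrodynamics with L_F = ℓ,
G = −2ℓ(‖∇φ‖²), and ψ is a potential with ∇ψ = G·∇φ, then ψ satisfies the source-free
Maxwell electrostatic equation iff φ satisfies the source-free electrostatic equation
of the nonlinear theory. -/
theorem nled_schwarzschild_electrostatics (r_s : ℝ) (hrs : 0 < r_s)
    (Ω : Set (EuclideanSpace ℝ (Fin 3))) (hΩ : IsOpen Ω)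
    (hΩout : ∀ x ∈ Ω, r_s / 4 < ‖x‖)
    (φ ψ : EuclideanSpace ℝ (Fin 3) → ℝ)
    (hφ : ContDiffOn ℝ 2 φ Ω) (hψ : ContDiffOn ℝ 2 ψ Ω)
    (ℓ : ℝ → ℝ) (hℓ : ContDiff ℝ 1 ℓ)
    (G : EuclideanSpace ℝ (Fin 3) → ℝ)
    (hG : ∀ x, G x = -2 * ℓ (‖gradient φ x‖ ^ 2))
    (hGne : ∀ x ∈ Ω, G x ≠ 0)
    (hDψ : ∀ x ∈ Ω, gradient ψ x = G x • gradient φ x)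
    (c : ℝ → ℝ)
    (hc : ∀ r : ℝ, c r =
      -(r_s / (4 * r ^ 2)) * (3 / (1 + r_s / (4 * r)) + 1 / (1 - r_s / (4 * r)))) :
    ∀ x ∈ Ω,
      (laplacian3 ψ x + c ‖x‖ * ⟪‖x‖⁻¹ • x, gradient ψ x⟫ = 0 ↔
        laplacian3 φ x + c ‖x‖ * ⟪‖x‖⁻¹ • x, gradient φ x⟫ +
          ⟪gradient G x, gradient φ x⟫ / G x = 0) :=
  nled_schwarzschild_electrostatics_general Ω hΩ φ ψ hφ ℓ hℓ G hG hGne hDψ c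
end

section
/- Let r_s > 0, a > r_s/4, q be real numbers and let θ be any real number with cos θ ∈ [−1, 1]. With b := r_s²/(16a) and Q := q/(1 + r_s/(4a))², one has μ(r_s/4, θ) = r_s/(4a) and ψ(r_s/4, θ) = q/(a·(1 + r_s/(4a))²); in particular the value of Linet's potential on the horizon r = r_s/4 is independent of θ (the horizon is an equipotential surface). -/
/-- Copson's auxiliary function μ(r,θ) with particle position `a` and `b = r_s²/(16a)`. -/
noncomputable def muLinet (r_s a r θ : ℝ) : ℝ :=
  Real.sqrt (((r - r_s ^ 2 / (16 * a)) ^ 2 +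
      2 * (r_s ^ 2 / (16 * a)) * r * (1 - Real.cos θ)) /
    ((r - a) ^ 2 + 2 * a * r * (1 - Real.cos θ)))

/-- Linet's electrostatic potential ψ(r,θ) = (Q/(rμ))·((μ + r_s/(4a))/(1 + r_s/(4r)))²,
with Q = q/(1 + r_s/(4a))². -/
noncomputable def psiLinet (r_s a q r θ : ℝ) : ℝ :=
  (q / (1 + r_s / (4 * a)) ^ 2) / (r * muLinet r_s a r θ) *
    ((muLinet r_s a r θ + r_s / (4 * a)) / (1 + r_s / (4 * r))) ^ 2

/-- On the horizon r = r_s/4 one has μ = r_s/(4a) and ψ = q/(a(1 + r_s/(4a))²),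
independently of θ: the horizon is an equipotential surface. -/
theorem linet_potential_on_horizon (r_s a q θ : ℝ)
    (hrs : 0 < r_s) (ha : r_s / 4 < a) (hθ : Real.cos θ ∈ Set.Icc (-1 : ℝ) 1) :
    muLinet r_s a (r_s / 4) θ = r_s / (4 * a) ∧
    psiLinet r_s a q (r_s / 4) θ = q / (a * (1 + r_s / (4 * a)) ^ 2) := by
  have ha0 : 0 < a := lt_trans (by positivity) ha
  have hcos : Real.cos θ ≤ 1 := hθ.2
  have hden : 0 < (r_s / 4 - a) ^ 2 + 2 * a * (r_s / 4) * (1 - Real.cos θ) := by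
    have hne : r_s / 4 - a ≠ 0 := by linarith
    have h1 : 0 < (r_s / 4 - a) ^ 2 := by positivity
    have h2 : 0 ≤ 2 * a * (r_s / 4) * (1 - Real.cos θ) :=
      mul_nonneg (by positivity) (by linarith)
    linarith
  have hmu : muLinet r_s a (r_s / 4) θ = r_s / (4 * a) := by
    unfold muLinet
    have hq : ((r_s / 4 - r_s ^ 2 / (16 * a)) ^ 2 +
        2 * (r_s ^ 2 / (16 * a)) * (r_s / 4) * (1 - Real.cos θ)) /
        ((r_s / 4 - a) ^ 2 + 2 * a * (r_s / 4) * (1 - Real.cos θ)) = (r_s / (4 * a)) ^ 2 := by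
      rw [div_eq_iff hden.ne']
      field_simp
      ring
    rw [hq, Real.sqrt_sq (by positivity)]
  refine ⟨hmu, ?_⟩
  unfold psiLinet
  rw [hmu]
  have h1 : (1 : ℝ) + r_s / (4 * a) ≠ 0 := by positivity
  field_simp
end

section
/- Let r_s > 0, a > r_s/4, q be real numbers and let θ be any real number. Then the function r ↦ ψ(r,θ) is differentiable at r = r_s/4 with derivative equal to 0 (i.e. HasDerivAt (fun r => ψ(r,θ)) 0 (r_s/4)). Together with the θ-independence of ψ on the horizon, this expresses that the electrostatic field of the charged particle vanishes on the black-hole horizon. -/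
/-! Write `s = r_s/4` and `k = r_s/(4a)`. Away from the zeros of `r` and `μ` the potential
factors as `ψ = Q · ((μ + k)²/μ) · (r/(r + s)²)`. On the horizon `μ(s) = k`, because `b = s²/a`
makes the numerator of `μ²` equal to `k²` times its denominator there. Now `u ↦ (u + k)²/u` is
critical at `u = k` and `r ↦ r/(r + s)²` is critical at `r = s`, so both factors, and hence `ψ`,
have zero radial derivative on the horizon. -/

theorem hasDerivAt_add_sq_div_self {k : ℝ} (hk : k ≠ 0) :
    HasDerivAt (fun u : ℝ => (u + k) ^ 2 / u) 0 k := by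
  have h := (((hasDerivAt_id' k).add_const k).fun_pow 2).div (hasDerivAt_id' k) hk
  refine h.congr_deriv ?_
  field_simp
  ring

theorem hasDerivAt_div_add_sq {s : ℝ} (hs : s ≠ 0) :
    HasDerivAt (fun r : ℝ => r / (r + s) ^ 2) 0 s := by
  have h := (hasDerivAt_id' s).div (((hasDerivAt_id' s).add_const s).fun_pow 2)
    (pow_ne_zero 2 (by simpa [← two_mul] using hs))
  refine h.congr_deriv ?_
  field_simp
  ring

theorem psiLinet_eq_mul {r_s a q r θ : ℝ} (hr : r ≠ 0) (hμ : muLinet r_s a r θ ≠ 0) :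
    psiLinet r_s a q r θ = q / (1 + r_s / (4 * a)) ^ 2 *
      ((muLinet r_s a r θ + r_s / (4 * a)) ^ 2 / muLinet r_s a r θ * (r / (r + r_s / 4) ^ 2)) := by
  rw [psiLinet]
  field_simp

theorem differentiableAt_muLinet {r_s a r θ : ℝ}
    (hD : (r - a) ^ 2 + 2 * a * r * (1 - Real.cos θ) ≠ 0) (hμ : muLinet r_s a r θ ≠ 0) :
    DifferentiableAt ℝ (fun r => muLinet r_s a r θ) r := by
  unfold muLinet at hμ ⊢
  exact ((by fun_prop : DifferentiableAt ℝ _ r).div (by fun_prop) hD).sqrt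
    fun h => hμ ((congrArg Real.sqrt h).trans Real.sqrt_zero)

section Horizon

variable {r_s a : ℝ} (θ : ℝ) (hrs : 0 < r_s) (ha : r_s / 4 < a)
include hrs ha

theorem muLinet_denominator_horizon_pos :
    0 < (r_s / 4 - a) ^ 2 + 2 * a * (r_s / 4) * (1 - Real.cos θ) := by
  have ha0 : 0 < a := by linarith
  have := Real.cos_le_one θ
  nlinarith [sq_pos_of_pos (sub_pos.2 ha), mul_pos ha0 hrs]

theorem muLinet_horizon : muLinet r_s a (r_s / 4) θ = r_s / (4 * a) := by
  have ha0 : 0 < a := by linarith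
  have hD := (muLinet_denominator_horizon_pos θ hrs ha).ne'
  have hrad : ((r_s / 4 - r_s ^ 2 / (16 * a)) ^ 2 +
      2 * (r_s ^ 2 / (16 * a)) * (r_s / 4) * (1 - Real.cos θ)) /
      ((r_s / 4 - a) ^ 2 + 2 * a * (r_s / 4) * (1 - Real.cos θ)) = (r_s / (4 * a)) ^ 2 := by
    rw [div_eq_iff hD]
    field_simp
    ring
  rw [muLinet, hrad, Real.sqrt_sq (by positivity)]

end Horizon

/-- The radial derivative of Linet's potential vanishes on the horizon r = r_s/4:
the electrostatic field vanishes on the black-hole horizon. -/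
theorem linet_potential_radial_derivative_on_horizon (r_s a q θ : ℝ)
    (hrs : 0 < r_s) (ha : r_s / 4 < a) :
    HasDerivAt (fun r => psiLinet r_s a q r θ) 0 (r_s / 4) := by
  have hk : 0 < r_s / (4 * a) := div_pos hrs (by linarith)
  have hμs := muLinet_horizon θ hrs ha
  have hμs_ne : muLinet r_s a (r_s / 4) θ ≠ 0 := hμs ▸ hk.ne'
  have hμ := (differentiableAt_muLinet (muLinet_denominator_horizon_pos θ hrs ha).ne' hμs_ne).hasDerivAt
  have hfactor : HasDerivAt (fun r => (muLinet r_s a r θ + r_s / (4 * a)) ^ 2 / muLinet r_s a r θ)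
      0 (r_s / 4) :=
    ((hasDerivAt_add_sq_div_self hk.ne').comp_of_eq (r_s / 4) hμ hμs.symm).congr_deriv
      (zero_mul _)
  have hprod := (hfactor.mul (hasDerivAt_div_add_sq (by positivity))).const_mul
    (q / (1 + r_s / (4 * a)) ^ 2)
  rw [mul_zero, zero_mul, zero_add, mul_zero] at hprod
  refine hprod.congr_of_eventuallyEq ?_
  have hμ_ne := hμ.continuousAt.eventually_ne hμs_ne
  have hpos : ∀ᶠ r in nhds (r_s / 4), 0 < r := Ioi_mem_nhds (by positivity)
  filter_upwards [hμ_ne, hpos] with r hμr hr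
  exact psiLinet_eq_mul hr.ne' hμr
end

section
/- Let r_s > 0, a > r_s/4 be real numbers, set b := r_s²/(16a), and let r > 0 and θ be real numbers such that (r − a)² + 2ar(1 − cos θ) ≠ 0 and (r − b)² + 2br(1 − cos θ) ≠ 0. Then the function θ ↦ μ(r,θ) is differentiable at θ with derivative r · μ(r,θ)³ · (a − b)(ab − r²) sin θ / ((r − b)² + 2br(1 − cos θ))², i.e. (1/μ³)(1/r)·∂μ/∂θ = (a − b)(ab − r²) sin θ/(r² + b² − 2br cos θ)². -/
/-!
Write μ = √(N/D) with N, D the squared distances (law of cosines) from the point (r, θ) to the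
points at distances b and a on the axis. The quotient rule and `d√u = du / (2√u)` give
`μ' = μ³ (N'D − ND') / (2N²)`, and `N'D − ND' = 2r sin θ (a − b)(ab − r²)` is a polynomial
identity.
-/

open Real

theorem HasDerivAt.sqrt_div {f g : ℝ → ℝ} {f' g' x : ℝ} (hf : HasDerivAt f f' x)
    (hg : HasDerivAt g g' x) (hfx : f x ≠ 0) (hgx : g x ≠ 0) :
    HasDerivAt (fun y => √(f y / g y))
      (√(f x / g x) ^ 3 * ((f' * g x - f x * g') / 2) / f x ^ 2) x := by
  refine ((hf.div hg hgx).sqrt (div_ne_zero hfx hgx)).congr_deriv ?_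
  rw [Pi.div_apply]
  rcases eq_or_ne √(f x / g x) 0 with hs | hs
  · -- for `f x / g x < 0` both sides vanish, by the convention `y / 0 = 0`
    simp [hs]
  · have hsq : √(f x / g x) ^ 2 = f x / g x :=
      sq_sqrt (Real.sqrt_ne_zero'.mp hs).le
    field_simp
    rw [show √(f x / g x) ^ 4 = (√(f x / g x) ^ 2) ^ 2 by ring, hsq]
    field_simp

theorem hasDerivAt_sq_sub_add_mul_one_sub_cos (c r θ : ℝ) :
    HasDerivAt (fun θ' => (r - c) ^ 2 + 2 * c * r * (1 - cos θ')) (2 * c * r * sin θ) θ := by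
  simpa using (((hasDerivAt_const θ 1).sub (hasDerivAt_cos θ)).const_mul (2 * c * r)).const_add
    ((r - c) ^ 2)

theorem muLinet_hasDerivAt_angular_general (r_s a r θ : ℝ)
    (hden : (r - a) ^ 2 + 2 * a * r * (1 - Real.cos θ) ≠ 0)
    (hnum : (r - r_s ^ 2 / (16 * a)) ^ 2 +
      2 * (r_s ^ 2 / (16 * a)) * r * (1 - Real.cos θ) ≠ 0) :
    HasDerivAt (fun θ' => muLinet r_s a r θ')
      (r * (muLinet r_s a r θ) ^ 3 * (a - r_s ^ 2 / (16 * a)) *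
        (a * (r_s ^ 2 / (16 * a)) - r ^ 2) * Real.sin θ /
        ((r - r_s ^ 2 / (16 * a)) ^ 2 +
          2 * (r_s ^ 2 / (16 * a)) * r * (1 - Real.cos θ)) ^ 2) θ := by
  unfold muLinet
  convert (hasDerivAt_sq_sub_add_mul_one_sub_cos (r_s ^ 2 / (16 * a)) r θ).sqrt_div
    (hasDerivAt_sq_sub_add_mul_one_sub_cos a r θ) hnum hden using 1
  congr 1
  ring

/-- Angular derivative of Copson's auxiliary function:
(1/μ³)(1/r)·∂μ/∂θ = (a − b)(ab − r²) sin θ/((r − b)² + 2br(1 − cos θ))²,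
with b = r_s²/(16a). -/
theorem muLinet_hasDerivAt_angular (r_s a r θ : ℝ)
    (hrs : 0 < r_s) (ha : r_s / 4 < a) (hr : 0 < r)
    (hden : (r - a) ^ 2 + 2 * a * r * (1 - Real.cos θ) ≠ 0)
    (hnum : (r - r_s ^ 2 / (16 * a)) ^ 2 +
      2 * (r_s ^ 2 / (16 * a)) * r * (1 - Real.cos θ) ≠ 0) :
    HasDerivAt (fun θ' => muLinet r_s a r θ')
      (r * (muLinet r_s a r θ) ^ 3 * (a - r_s ^ 2 / (16 * a)) *
        (a * (r_s ^ 2 / (16 * a)) - r ^ 2) * Real.sin θ /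
        ((r - r_s ^ 2 / (16 * a)) ^ 2 +
          2 * (r_s ^ 2 / (16 * a)) * r * (1 - Real.cos θ)) ^ 2) θ :=
  muLinet_hasDerivAt_angular_general r_s a r θ hden hnum
end

section
/- With β ≠ 0, real F, G, U := 1 + F/β² − G²/(4β⁴) > 0, L_F := −1/(2√U), L_G := G/(4β²√U), the dual invariant S := 4(L_F² − L_G²)G − 8 L_F L_G F satisfies S = G. -/
theorem bornInfeld_dual_invariant_S_general (β F G : ℝ)
    (hU : 0 < 1 + F / β ^ 2 - G ^ 2 / (4 * β ^ 4)) :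
    let U := 1 + F / β ^ 2 - G ^ 2 / (4 * β ^ 4)
    let L_F := -1 / (2 * Real.sqrt U)
    let L_G := G / (4 * β ^ 2 * Real.sqrt U)
    4 * (L_F ^ 2 - L_G ^ 2) * G - 8 * L_F * L_G * F = G := by
  intro U L_F L_G
  have hsqrt : Real.sqrt U ^ 2 = U := Real.sq_sqrt hU.le
  have hLF : L_F ^ 2 = 1 / (4 * U) := by
    simp only [L_F, div_pow, mul_pow, hsqrt]; norm_num
  have hLG : L_G ^ 2 = G ^ 2 / (16 * β ^ 4 * U) := by
    simp only [L_G, div_pow, mul_pow, hsqrt]; ring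
  have hLFLG : L_F * L_G = -G / (8 * β ^ 2 * U) := by
    rw [← hsqrt]; ring
  have hU_def : 1 + F / β ^ 2 - G ^ 2 / (4 * β ^ 4) = U := rfl
  have hU_ne : U ≠ 0 := hU.ne'
  -- Otherwise `ring` unfolds `U` and loses the factorization below.
  clear_value L_F L_G U
  -- Every term carries the factor 1/U, and what multiplies it is U itself.
  calc 4 * (L_F ^ 2 - L_G ^ 2) * G - 8 * L_F * L_G * F
      = G / U * (1 + F / β ^ 2 - G ^ 2 / (4 * β ^ 4)) := by
        rw [mul_assoc 8 L_F, hLF, hLG, hLFLG]; ring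
    _ = G := by rw [hU_def, div_mul_cancel₀ G hU_ne]

/-- For Born–Infeld electrodynamics, the dual invariant S built from the excitation
tensor satisfies S = G. -/
theorem bornInfeld_dual_invariant_S (β F G : ℝ) (hβ : β ≠ 0)
    (hU : 0 < 1 + F / β ^ 2 - G ^ 2 / (4 * β ^ 4)) :
    let U := 1 + F / β ^ 2 - G ^ 2 / (4 * β ^ 4)
    let L_F := -1 / (2 * Real.sqrt U)
    let L_G := G / (4 * β ^ 2 * Real.sqrt U)
    4 * (L_F ^ 2 - L_G ^ 2) * G - 8 * L_F * L_G * F = G :=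
  bornInfeld_dual_invariant_S_general β F G hU
end

section
/- With β ≠ 0, real F, G, U := 1 + F/β² − G²/(4β⁴) > 0, L_F := −1/(2√U), L_G := G/(4β²√U), P := 4(L_F² − L_G²)F + 8 L_F L_G G and S := 4(L_F² − L_G²)G − 8 L_F L_G F, the quantity V := 1 − P/β² − S²/(4β⁴) satisfies V = (1 + G²/(4β⁴))²/U. -/
/-!
Since `√U` enters `L_F` and `L_G` only through `L_F² - L_G²` and `L_F L_G`, both rational in
`U = (√U)²`, the whole computation is rational. The second invariant is self-dual, `S = G`,
and with `f = F/β²`, `g = G²/(4β⁴)`, `U = 1 + f - g` one finds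
`V = 1 - g - ((1 - g) f - 4g)/U = ((1 - g)² + 4g)/U = (1 + g)²/U`.
-/

namespace BornInfeld

noncomputable def U (β F G : ℝ) : ℝ := 1 + F / β ^ 2 - G ^ 2 / (4 * β ^ 4)

noncomputable def LF (β F G : ℝ) : ℝ := -1 / (2 * √(U β F G))

noncomputable def LG (β F G : ℝ) : ℝ := G / (4 * β ^ 2 * √(U β F G))

noncomputable def P (β F G : ℝ) : ℝ :=
  4 * (LF β F G ^ 2 - LG β F G ^ 2) * F + 8 * LF β F G * LG β F G * G

noncomputable def S (β F G : ℝ) : ℝ :=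
  4 * (LF β F G ^ 2 - LG β F G ^ 2) * G - 8 * LF β F G * LG β F G * F

noncomputable def V (β F G : ℝ) : ℝ := 1 - P β F G / β ^ 2 - S β F G ^ 2 / (4 * β ^ 4)

variable {β F G : ℝ}

theorem LF_sq_sub_LG_sq (h : 0 ≤ U β F G) :
    LF β F G ^ 2 - LG β F G ^ 2 = (1 - G ^ 2 / (4 * β ^ 4)) / (4 * U β F G) := by
  simp only [LF, LG, div_pow, mul_pow, Real.sq_sqrt h]
  ring

theorem LF_mul_LG (h : 0 ≤ U β F G) :
    LF β F G * LG β F G = -(G / β ^ 2) / (8 * U β F G) := by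
  rw [← Real.sq_sqrt h, LF, LG]
  ring

theorem S_eq_G (h : 0 < U β F G) : S β F G = G := by
  have hU : U β F G ≠ 0 := h.ne'
  rw [S, mul_assoc 8, LF_sq_sub_LG_sq h.le, LF_mul_LG h.le]
  field_simp
  unfold U
  ring

theorem P_div_sq_eq (h : 0 < U β F G) :
    P β F G / β ^ 2 =
      ((1 - G ^ 2 / (4 * β ^ 4)) * (F / β ^ 2) - 4 * (G ^ 2 / (4 * β ^ 4))) / U β F G := by
  rw [P, mul_assoc 8, LF_sq_sub_LG_sq h.le, LF_mul_LG h.le]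
  ring

theorem V_eq (h : 0 < U β F G) : V β F G = (1 + G ^ 2 / (4 * β ^ 4)) ^ 2 / U β F G := by
  have hU : U β F G ≠ 0 := h.ne'
  have hU_def : U β F G = 1 + F / β ^ 2 - G ^ 2 / (4 * β ^ 4) := rfl
  rw [V, P_div_sq_eq h, S_eq_G h]
  generalize F / β ^ 2 = f at hU_def
  generalize G ^ 2 / (4 * β ^ 4) = g at hU_def
  field_simp
  rw [hU_def]
  ring

end BornInfeld

theorem bornInfeld_dual_invariant_V_general (β F G : ℝ)
    (hU : 0 < 1 + F / β ^ 2 - G ^ 2 / (4 * β ^ 4)) :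
    let U := 1 + F / β ^ 2 - G ^ 2 / (4 * β ^ 4)
    let L_F := -1 / (2 * Real.sqrt U)
    let L_G := G / (4 * β ^ 2 * Real.sqrt U)
    let P := 4 * (L_F ^ 2 - L_G ^ 2) * F + 8 * L_F * L_G * G
    let S := 4 * (L_F ^ 2 - L_G ^ 2) * G - 8 * L_F * L_G * F
    1 - P / β ^ 2 - S ^ 2 / (4 * β ^ 4) = (1 + G ^ 2 / (4 * β ^ 4)) ^ 2 / U :=
  BornInfeld.V_eq hU

/-- For Born–Infeld electrodynamics, V := 1 − P/β² − S²/(4β⁴) built from the dual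
invariants satisfies V = (1 + G²/(4β⁴))²/U. -/
theorem bornInfeld_dual_invariant_V (β F G : ℝ) (hβ : β ≠ 0)
    (hU : 0 < 1 + F / β ^ 2 - G ^ 2 / (4 * β ^ 4)) :
    let U := 1 + F / β ^ 2 - G ^ 2 / (4 * β ^ 4)
    let L_F := -1 / (2 * Real.sqrt U)
    let L_G := G / (4 * β ^ 2 * Real.sqrt U)
    let P := 4 * (L_F ^ 2 - L_G ^ 2) * F + 8 * L_F * L_G * G
    let S := 4 * (L_F ^ 2 - L_G ^ 2) * G - 8 * L_F * L_G * F
    1 - P / β ^ 2 - S ^ 2 / (4 * β ^ 4) = (1 + G ^ 2 / (4 * β ^ 4)) ^ 2 / U :=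
  bornInfeld_dual_invariant_V_general β F G hU
end

section
/- Let r_s, ε, q, λ be positive real numbers (ε = mc² is the particle's rest energy and λ the Born–Infeld length). For l > 0 set a := (r_s + l)/4 and define the energy measured at infinity E(l) := ε·(1 − r_s/(4a))/(1 + r_s/(4a)) + (q²/(2λ))·√((1 − r_s/(4a))/(1 + r_s/(4a))) + q²·r_s/(4a²(1 + r_s/(4a))⁴). Then the function l ↦ E(l) − (1/(4r_s))·(2εl + q²·(1 + √(2·l·r_s)/λ)) is O(l^{3/2}) as l → 0⁺ (with respect to the filter 𝓝[>] 0). In particular E(l) = (1/(4r_s))[2εl + q²(1 + √(2 l r_s)/λ)] up to higher-order corrections, where l is the proper distance of the particle's center of mass from the horizon. -/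
open Filter Topology Asymptotics

/-!
With `a = (r_s + l)/4` the redshift factor `(1 - r_s/4a)/(1 + r_s/4a)` equals `l/(2 r_s + l)`.
The rest-energy and electrostatic terms then differ from their approximations by `l²` times a
function continuous at `0`, while the Born–Infeld self-energy term differs from its approximation
by `√l · (g l - g 0)` with `g l = (2 r_s + l)^{-1/2}` differentiable at `0`. Both errors are
`O(l^{3/2})` as `l → 0⁺`.
-/

lemma isBigO_rpow_rpow_nhdsGT_zero {p q : ℝ} (hpq : p ≤ q) :
    (fun l : ℝ => l ^ q) =O[𝓝[>] 0] fun l => l ^ p := by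
  refine IsBigO.of_bound 1 ?_
  filter_upwards [Ioo_mem_nhdsGT one_pos] with l ⟨hl0, hl1⟩
  rw [one_mul, Real.norm_of_nonneg (by positivity), Real.norm_of_nonneg (by positivity)]
  exact Real.rpow_le_rpow_of_exponent_ge hl0 hl1.le hpq

lemma rpow_three_halves_eq_sqrt_mul {l : ℝ} (hl : 0 ≤ l) : l ^ ((3 : ℝ) / 2) = √l * l := by
  rw [Real.sqrt_eq_rpow, show (3 : ℝ) / 2 = 1 / 2 + 1 by norm_num,
    Real.rpow_add' hl (by norm_num), Real.rpow_one]

lemma isBigO_sq_mul_of_continuousAt {f : ℝ → ℝ} (hf : ContinuousAt f 0) :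
    (fun l => l ^ 2 * f l) =O[𝓝[>] 0] fun l => l ^ ((3 : ℝ) / 2) := by
  have hsq : (fun l : ℝ => l ^ 2) =O[𝓝[>] 0] fun l => l ^ ((3 : ℝ) / 2) := by
    simpa only [← Real.rpow_natCast] using isBigO_rpow_rpow_nhdsGT_zero (by norm_num)
  simpa only [mul_one] using hsq.mul ((hf.tendsto.isBigO_one ℝ).mono nhdsWithin_le_nhds)

lemma isBigO_sqrt_mul_sub_of_differentiableAt {g : ℝ → ℝ} (hg : DifferentiableAt ℝ g 0) :
    (fun l => √l * (g l - g 0)) =O[𝓝[>] 0] fun l => l ^ ((3 : ℝ) / 2) := by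
  have hsub : (fun l => g l - g 0) =O[𝓝[>] 0] fun l => l := by
    simpa only [sub_zero] using hg.isBigO_sub.mono nhdsWithin_le_nhds
  refine ((isBigO_refl (fun l => √l) _).mul hsub).congr' EventuallyEq.rfl ?_
  filter_upwards [self_mem_nhdsWithin] with l hl
  exact (rpow_three_halves_eq_sqrt_mul hl.le).symm

noncomputable def energyAtInfinity (r_s ε q lam a : ℝ) : ℝ :=
  ε * (1 - r_s / (4 * a)) / (1 + r_s / (4 * a)) +
    (q ^ 2 / (2 * lam)) * √((1 - r_s / (4 * a)) / (1 + r_s / (4 * a))) +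
    q ^ 2 * r_s / (4 * a ^ 2 * (1 + r_s / (4 * a)) ^ 4)

lemma redshift_factor_isotropic {r_s l : ℝ} (h : r_s + l ≠ 0) :
    (1 - r_s / (4 * ((r_s + l) / 4))) / (1 + r_s / (4 * ((r_s + l) / 4))) =
      l / (2 * r_s + l) := by
  rw [mul_div_cancel₀ _ four_ne_zero, one_sub_div h, one_add_div h,
    div_div_div_cancel_right₀ h]
  ring_nf

lemma energyAtInfinity_sub_eq {r_s ε q lam l : ℝ} (hrs : 0 < r_s) (hl : 0 < l) :
    energyAtInfinity r_s ε q lam ((r_s + l) / 4) -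
        (1 / (4 * r_s)) * (2 * ε * l + q ^ 2 * (1 + √(2 * l * r_s) / lam)) =
      l ^ 2 * (-(ε / (2 * r_s * (2 * r_s + l))) -
          q ^ 2 * (8 * r_s * (r_s + l) + l ^ 2) / (4 * r_s * (2 * r_s + l) ^ 4)) +
        q ^ 2 / (2 * lam) * (√l * ((√(2 * r_s + l))⁻¹ - (√(2 * r_s))⁻¹)) := by
  have hrl : r_s + l ≠ 0 := by positivity
  have hu : √(2 * r_s) ^ 2 = 2 * r_s := Real.sq_sqrt (by positivity)
  have hu0 : √(2 * r_s) ≠ 0 := by positivity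
  have ht0 : √(2 * r_s + l) ≠ 0 := by positivity
  have hsqrt : √(2 * l * r_s) = √l * √(2 * r_s) := by
    rw [← Real.sqrt_mul hl.le]
    ring_nf
  unfold energyAtInfinity
  rw [mul_div_assoc, redshift_factor_isotropic hrl, Real.sqrt_div hl.le, hsqrt,
    mul_div_cancel₀ _ four_ne_zero]
  -- writing `r_s = u²/2` with `u = √(2 r_s)` leaves a rational identity
  generalize √(2 * r_s) = u at hu hu0 ⊢
  obtain rfl : r_s = u ^ 2 / 2 := by linarith
  field_simp
  ring

theorem bornInfeld_energy_near_horizon_general (r_s ε q lam : ℝ)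
    (hrs : 0 < r_s) :
    (fun l : ℝ =>
        (fun a : ℝ =>
            ε * (1 - r_s / (4 * a)) / (1 + r_s / (4 * a)) +
              (q ^ 2 / (2 * lam)) *
                Real.sqrt ((1 - r_s / (4 * a)) / (1 + r_s / (4 * a))) +
              q ^ 2 * r_s / (4 * a ^ 2 * (1 + r_s / (4 * a)) ^ 4)) ((r_s + l) / 4) -
          (1 / (4 * r_s)) * (2 * ε * l + q ^ 2 * (1 + Real.sqrt (2 * l * r_s) / lam)))
      =O[𝓝[>] 0] fun l : ℝ => l ^ ((3 : ℝ) / 2) := by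
  have hf : ContinuousAt (fun l : ℝ => -(ε / (2 * r_s * (2 * r_s + l))) -
      q ^ 2 * (8 * r_s * (r_s + l) + l ^ 2) / (4 * r_s * (2 * r_s + l) ^ 4)) 0 := by
    fun_prop (disch := positivity)
  have hg : DifferentiableAt ℝ (fun l : ℝ => (√(2 * r_s + l))⁻¹) 0 := by
    fun_prop (disch := positivity)
  refine ((isBigO_sq_mul_of_continuousAt hf).add
    ((isBigO_sqrt_mul_sub_of_differentiableAt hg).const_mul_left (q ^ 2 / (2 * lam)))).congr'
    ?_ EventuallyEq.rfl
  filter_upwards [self_mem_nhdsWithin] with l hl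
  simp only [add_zero]
  exact (energyAtInfinity_sub_eq hrs hl).symm

/-- The energy measured at infinity of a Born–Infeld charged body of rest energy ε,
charge q and Born–Infeld length λ, held at isotropic radius a = (r_s + l)/4 (proper
distance l from the horizon), equals (1/(4r_s))[2εl + q²(1 + √(2lr_s)/λ)] up to
O(l^{3/2}) corrections as l → 0⁺. -/
theorem bornInfeld_energy_near_horizon (r_s ε q lam : ℝ)
    (hrs : 0 < r_s) (hε : 0 < ε) (hq : 0 < q) (hlam : 0 < lam) :
    (fun l : ℝ =>
        (fun a : ℝ =>
            ε * (1 - r_s / (4 * a)) / (1 + r_s / (4 * a)) +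
              (q ^ 2 / (2 * lam)) *
                Real.sqrt ((1 - r_s / (4 * a)) / (1 + r_s / (4 * a))) +
              q ^ 2 * r_s / (4 * a ^ 2 * (1 + r_s / (4 * a)) ^ 4)) ((r_s + l) / 4) -
          (1 / (4 * r_s)) * (2 * ε * l + q ^ 2 * (1 + Real.sqrt (2 * l * r_s) / lam)))
      =O[𝓝[>] 0] fun l : ℝ => l ^ ((3 : ℝ) / 2) :=
  bornInfeld_energy_near_horizon_general r_s ε q lam hrs
end

section
/- Let r_s > 0, q be real, and fix r > r_s/4 and a real angle θ. For a > r_s/4 let ψ_a(r,θ) denote Linet's potential with particle position a (so with b = r_s²/(16a), Q = q/(1 + r_s/(4a))² and μ depending on a). Then ψ_a(r,θ) tends to q/(r·(1 + r_s/(4r))²) as a → (r_s/4)⁺ (with respect to the filter 𝓝[>] (r_s/4)): in the limit in which the charged particle reaches the horizon, the potential becomes spherically symmetric. -/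
open Filter Topology

/-- In the limit in which the charged particle reaches the horizon, a → (r_s/4)⁺,
Linet's potential becomes the spherically symmetric q/(r(1 + r_s/(4r))²). -/
theorem linet_potential_particle_at_horizon (r_s q r θ : ℝ)
    (hrs : 0 < r_s) (hq : q ≠ 0) (hr : r_s / 4 < r) :
    Tendsto (fun a : ℝ => psiLinet r_s a q r θ) (𝓝[>] (r_s / 4))
      (𝓝 (q / (r * (1 + r_s / (4 * r)) ^ 2))) := by
  set c := r_s / 4 with hcdef
  have hc : (0:ℝ) < c := by simp [hcdef]; linarith
  have hr0 : 0 < r := lt_trans hc hr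
  have hbc : r_s ^ 2 / (16 * c) = c := by
    rw [hcdef]; field_simp; ring
  have hcos : Real.cos θ ≤ 1 := Real.cos_le_one θ
  have hDpos : 0 < (r - c) ^ 2 + 2 * c * r * (1 - Real.cos θ) := by
    have h1 : 0 < (r - c) ^ 2 := pow_pos (by linarith) 2
    have h2 : 0 ≤ 2 * c * r * (1 - Real.cos θ) :=
      mul_nonneg (by positivity) (by linarith)
    linarith
  have hmu : muLinet r_s c r θ = 1 := by
    unfold muLinet
    rw [hbc, div_self (ne_of_gt hDpos), Real.sqrt_one]
  have h4c : (4 : ℝ) * c ≠ 0 := by positivity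
  have hrs4c : r_s / (4 * c) = 1 := by
    rw [hcdef]; field_simp
  have hcont_b : ContinuousAt (fun a : ℝ => r_s ^ 2 / (16 * a)) c :=
    continuousAt_const.div (continuousAt_const.mul continuousAt_id) (by positivity)
  have hcont_rs4a : ContinuousAt (fun a : ℝ => r_s / (4 * a)) c :=
    continuousAt_const.div (continuousAt_const.mul continuousAt_id) h4c
  have hcontN : ContinuousAt (fun a : ℝ => (r - r_s ^ 2 / (16 * a)) ^ 2 +
      2 * (r_s ^ 2 / (16 * a)) * r * (1 - Real.cos θ)) c :=
    ((continuousAt_const.sub hcont_b).pow 2).add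
      (((continuousAt_const.mul hcont_b).mul continuousAt_const).mul continuousAt_const)
  have hcontD : ContinuousAt (fun a : ℝ => (r - a) ^ 2 + 2 * a * r * (1 - Real.cos θ)) c := by
    fun_prop
  have hcontμ : ContinuousAt (fun a : ℝ => muLinet r_s a r θ) c := by
    simp only [muLinet]
    exact Real.continuous_sqrt.continuousAt.comp (hcontN.div hcontD (ne_of_gt hDpos))
  have hone : (1 : ℝ) + r_s / (4 * c) ≠ 0 := by rw [hrs4c]; norm_num
  have hcontψ : ContinuousAt (fun a : ℝ => psiLinet r_s a q r θ) c := by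
    simp only [psiLinet]
    apply ContinuousAt.mul
    · apply ContinuousAt.div
      · exact continuousAt_const.div ((continuousAt_const.add hcont_rs4a).pow 2)
          (pow_ne_zero 2 hone)
      · exact continuousAt_const.mul hcontμ
      · rw [hmu, mul_one]; exact ne_of_gt hr0
    · exact ((hcontμ.add hcont_rs4a).div continuousAt_const (by positivity)).pow 2
  have hval : psiLinet r_s c q r θ = q / (r * (1 + r_s / (4 * r)) ^ 2) := by
    simp only [psiLinet, hmu, hrs4c]
    have h4r : (1 : ℝ) + r_s / (4 * r) ≠ 0 := by positivity
    field_simp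
  rw [← hval]
  exact hcontψ.tendsto.mono_left nhdsWithin_le_nhds
end
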